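/- For any move x → x' from an exceptional position x in NIM(k+1,k), B(x) = B(x') = m(x) − 1, which is odd. -/

import Mathlib

/-!
Put `b = m - 1`, which is odd. A basic `z ⪯ y` with parameter `b'` has `k * b' = |z| ≤ |y|`.
For `x` this gives `b' ≤ m`, and `b' = m` is impossible: `z` would be all even against the
all-odd `x`, so every sorted coordinate drops by at least one and `|z| ≤ |x| - (k + 1) < k * m`.
After a move, `|x'| = k * m - 1` gives `b' < m` directly.

Conversely, a move keeps one odd coordinate and makes the other `k` even. Keeping in addition
one even coordinate `j₀` and lowering the remaining `k - 1` by one gives a basic position with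
parameter `b` below `x'`, hence below `x`. Those `k - 1` coordinates must be positive: this
holds for a suitable `j₀` since `|x| = k * m + k - 1` with all `x i < m` allows at most one
coordinate of `x` to equal `1`.
-/

/-- `z` is a basic position with parameter `b`: coordinate sum `k*b`, all coordinates
at most `b`, all coordinates even if `b` is even, exactly one even if `b` is odd. -/
def IsBasic (k : ℕ) (z : Fin (k+1) → ℕ) (b : ℕ) : Prop :=
  (∑ i, z i) = k * b ∧ (∀ i, z i ≤ b) ∧
    (Even b → ∀ i, Even (z i)) ∧ (Odd b → ∃! i, Even (z i))

/-- `Pre k y x` means `y ⪯ x`: the sorted vector of `y` is componentwise ≤ that of `x`. -/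
def Pre (k : ℕ) (y x : Fin (k+1) → ℕ) : Prop :=
  ∀ i, (y ∘ Tuple.sort y) i ≤ (x ∘ Tuple.sort x) i

/-- `BVal k x = max { b : some basic z with parameter b satisfies z ⪯ x }`. -/
noncomputable def BVal (k : ℕ) (x : Fin (k+1) → ℕ) : ℕ :=
  sSup {b | ∃ z, IsBasic k z b ∧ Pre k z x}

/-- A move in NIM(k+1,k): keep coordinate `i`, decrease every other (positive) coordinate by 1. -/
def MoveK (k : ℕ) (x y : Fin (k+1) → ℕ) : Prop :=
  ∃ i, (∀ j, j ≠ i → 0 < x j) ∧ ∀ j, y j = if j = i then x j else x j - 1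

/-- The M-move: keep a smallest even coordinate if one exists, otherwise keep a
largest coordinate; decrease the other k (positive) coordinates by 1. -/
def MMove (k : ℕ) (x y : Fin (k+1) → ℕ) : Prop :=
  ∃ i, (∀ j, j ≠ i → 0 < x j) ∧
    ((∃ j, Even (x j)) → Even (x i) ∧ ∀ j, Even (x j) → x i ≤ x j) ∧
    ((∀ j, Odd (x j)) → ∀ j, x j ≤ x i) ∧
    (∀ j, y j = if j = i then x j else x j - 1)

/-- Exceptional position: all coordinates odd, all `< m`, and `|x| = k*m + k - 1`
for some even `m`. -/
def Exceptional (k : ℕ) (x : Fin (k+1) → ℕ) : Prop :=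
  ∃ m, Even m ∧ (∀ i, Odd (x i)) ∧ (∀ i, x i < m) ∧ (∑ i, x i) = k * m + k - 1

/-- `MVal k x m`: playing the M-rule from `x`, the game ends after exactly `m` moves. -/
inductive MVal (k : ℕ) : (Fin (k+1) → ℕ) → ℕ → Prop
  | zero (x) : (¬ ∃ y, MoveK k x y) → MVal k x 0
  | succ (x y m) : MMove k x y → MVal k y m → MVal k x (m + 1)

open Finset

theorem Tuple.comp_sort_le_of_le_of_monotone {α : Type*} [LinearOrder α] {n : ℕ}
    {z w : Fin n → α} (hw : Monotone w) (hzw : ∀ i, z i ≤ w i) (i : Fin n) :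
    z (Tuple.sort z i) ≤ w i := by
  -- pigeonhole: `sort z` cannot map all of `Ici i` into `Ioi i`
  obtain ⟨j, hij, hji⟩ : ∃ j, i ≤ j ∧ Tuple.sort z j ≤ i := by
    by_contra! hc
    have := card_le_card_of_injOn (Tuple.sort z)
      (fun a ha => mem_Ioi.2 (hc a (mem_Ici.1 ha))) (Tuple.sort z).injective.injOn
    simp only [Fin.card_Ici, Fin.card_Ioi] at this
    omega
  calc z (Tuple.sort z i) ≤ z (Tuple.sort z j) := Tuple.monotone_sort z hij
    _ ≤ w (Tuple.sort z j) := hzw _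
    _ ≤ w i := hw hji

theorem Pre.of_le {k : ℕ} {z y : Fin (k+1) → ℕ} (h : ∀ i, z i ≤ y i) : Pre k z y := by
  intro i
  rw [← Tuple.comp_perm_comp_sort_eq_comp_sort (σ := Tuple.sort y)]
  exact Tuple.comp_sort_le_of_le_of_monotone (Tuple.monotone_sort y) (fun j => h _) i

theorem Pre.sum_le {k : ℕ} {z y : Fin (k+1) → ℕ} (h : Pre k z y) : ∑ i, z i ≤ ∑ i, y i := by
  rw [← Equiv.sum_comp (Tuple.sort z) z, ← Equiv.sum_comp (Tuple.sort y) y]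
  exact sum_le_sum fun i _ => h i

theorem Pre.sum_add_le_of_ne {k : ℕ} {z y : Fin (k+1) → ℕ} (h : Pre k z y)
    (hne : ∀ i j, z i ≠ y j) : ∑ i, z i + (k + 1) ≤ ∑ i, y i := by
  rw [← Equiv.sum_comp (Tuple.sort z) z, ← Equiv.sum_comp (Tuple.sort y) y]
  calc ∑ i, z (Tuple.sort z i) + (k + 1) = ∑ i, (z (Tuple.sort z i) + 1) := by
        simp [sum_add_distrib]
    _ ≤ ∑ i, y (Tuple.sort y i) := sum_le_sum fun i _ => (h i).lt_of_ne (hne _ _)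

theorem sum_ite_mem_sub_one_add_card_compl {ι : Type*} [Fintype ι] [DecidableEq ι]
    (s : Finset ι) (y : ι → ℕ) (hy : ∀ j ∉ s, 0 < y j) :
    ∑ j, (if j ∈ s then y j else y j - 1) + #sᶜ = ∑ j, y j := by
  have hpt : ∀ j, (if j ∈ s then y j else y j - 1) + (if j ∈ s then 0 else 1) = y j := by
    intro j
    split_ifs with hj
    · rfl
    · have := hy j hj; omega
  rw [← sum_congr rfl fun j _ => hpt j, sum_add_distrib]
  simp [sum_ite, compl_eq_univ_sdiff, filter_notMem_eq_sdiff]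

theorem MoveK.le {k : ℕ} {x x' : Fin (k+1) → ℕ} (h : MoveK k x x') (j : Fin (k+1)) :
    x' j ≤ x j := by
  obtain ⟨i, -, hx'⟩ := h
  rw [hx']
  split_ifs <;> omega

theorem MoveK.sum_add {k : ℕ} {x x' : Fin (k+1) → ℕ} (h : MoveK k x x') :
    ∑ j, x' j + k = ∑ j, x j := by
  obtain ⟨i, hpos, hx'⟩ := h
  have := sum_ite_mem_sub_one_add_card_compl {i} x fun j hj => hpos j (by simpa using hj)
  simpa [hx', card_compl] using this

theorem isBasic_of_odd {k b : ℕ} {z : Fin (k+1) → ℕ} (hb : Odd b) (hsum : ∑ i, z i = k * b)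
    (hle : ∀ i, z i ≤ b) {j₀ : Fin (k+1)} (hz : ∀ i, Even (z i) ↔ i = j₀) : IsBasic k z b :=
  ⟨hsum, hle, fun he => absurd he (Nat.not_even_iff_odd.2 hb),
    fun _ => ⟨j₀, (hz j₀).2 rfl, fun i hi => (hz i).1 hi⟩⟩

theorem eq_of_eq_one_of_eq_one {k m : ℕ} (hk : 2 ≤ k) {x : Fin (k+1) → ℕ}
    (hlt : ∀ i, x i < m) (hsum : ∑ i, x i = k * m + k - 1) {a b : Fin (k+1)}
    (ha : x a = 1) (hb : x b = 1) : a = b := by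
  by_contra hab
  obtain ⟨p, rfl⟩ : ∃ p, k = p + 2 := ⟨k - 2, by omega⟩
  obtain ⟨q, rfl⟩ : ∃ q, m = q + 2 := ⟨m - 2, by have := hlt a; omega⟩
  have hrest : ∑ i ∈ {a, b}ᶜ, x i ≤ (p + 1) * (q + 1) := by
    calc ∑ i ∈ {a, b}ᶜ, x i ≤ #({a, b}ᶜ : Finset _) • (q + 1) :=
          sum_le_card_nsmul _ _ _ fun i _ => Nat.le_of_lt_succ (hlt i)
      _ = (p + 1) * (q + 1) := by
          rw [card_compl, card_pair hab, Fintype.card_fin, smul_eq_mul]; rfl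
  have := sum_add_sum_compl {a, b} x
  rw [sum_pair hab, ha, hb, hsum] at this
  ring_nf at this hrest
  omega

theorem exists_ne_forall_two_le {k m : ℕ} (hk : 2 ≤ k) {x : Fin (k+1) → ℕ}
    (hodd : ∀ i, Odd (x i)) (hlt : ∀ i, x i < m) (hsum : ∑ i, x i = k * m + k - 1)
    (i : Fin (k+1)) : ∃ j₀, j₀ ≠ i ∧ ∀ j ∉ ({i, j₀} : Finset _), 2 ≤ x j := by
  by_cases hone : ∃ j ≠ i, x j = 1
  · obtain ⟨j₀, hj₀i, hj₀⟩ := hone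
    refine ⟨j₀, hj₀i, fun j hj => ?_⟩
    have hne : x j ≠ 1 := fun h => by
      simp_all [eq_of_eq_one_of_eq_one hk hlt hsum h hj₀]
    have := (hodd j).pos
    omega
  · push Not at hone
    have : Nontrivial (Fin (k+1)) := Fin.nontrivial_iff_two_le.2 (by omega)
    obtain ⟨j₀, hj₀i⟩ := exists_ne i
    refine ⟨j₀, hj₀i, fun j hj => ?_⟩
    have hne := hone j (by simp_all)
    have := (hodd j).pos
    omega

theorem isBasic_ite_mem_pair_sub_one {k b : ℕ} (hb : Odd b) {y : Fin (k+1) → ℕ}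
    {i j₀ : Fin (k+1)} (hj₀i : j₀ ≠ i) (hyi : Odd (y i)) (hy : ∀ j ≠ i, Even (y j))
    (hpos : ∀ j ∉ ({i, j₀} : Finset _), 0 < y j) (hle : ∀ j, y j ≤ b)
    (hsum : ∑ j, y j = k * b + k - 1) :
    IsBasic k (fun j => if j ∈ ({i, j₀} : Finset _) then y j else y j - 1) b := by
  have hzsum := sum_ite_mem_sub_one_add_card_compl {i, j₀} y hpos
  rw [card_compl, card_pair hj₀i.symm, Fintype.card_fin] at hzsum
  refine isBasic_of_odd hb (by omega) (fun j => by have := hle j; split_ifs <;> omega)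
    (j₀ := j₀) fun j => ?_
  by_cases hji : j = i
  · subst hji
    simp only [mem_insert, mem_singleton, hj₀i.symm, or_false, ↓reduceIte, iff_false]
    exact Nat.not_even_iff_odd.2 hyi
  obtain ⟨c, hc⟩ := hy j hji
  by_cases hjj₀ : j = j₀
  · subst hjj₀
    simp only [mem_insert, mem_singleton, or_true, ↓reduceIte, iff_true]
    exact hy j hji
  have := hpos j (by simp [hji, hjj₀])
  simp only [mem_insert, hji, mem_singleton, hjj₀, or_self, ↓reduceIte, Nat.even_iff, iff_false]
  omega

theorem exists_isBasic_le_of_moveK {k m : ℕ} (hk : 2 ≤ k) {x x' : Fin (k+1) → ℕ}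
    (hm : Even m) (hodd : ∀ i, Odd (x i)) (hlt : ∀ i, x i < m)
    (hsum : ∑ i, x i = k * m + k - 1) (h : MoveK k x x') :
    ∃ z, IsBasic k z (m - 1) ∧ ∀ j, z j ≤ x' j := by
  obtain ⟨i, -, hx'⟩ := id h
  obtain ⟨j₀, hj₀i, htwo⟩ := exists_ne_forall_two_le hk hodd hlt hsum i
  have hx'i : Odd (x' i) := by simpa [hx'] using hodd i
  have hx'even : ∀ j ≠ i, Even (x' j) := fun j hji => by
    rw [hx', if_neg hji]
    exact Nat.Odd.sub_odd (hodd j) odd_one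
  have hx'pos : ∀ j ∉ ({i, j₀} : Finset _), 0 < x' j := fun j hj => by
    have := htwo j hj
    rw [hx', if_neg (by simp_all)]
    omega
  have hx'sum := h.sum_add
  refine ⟨_, isBasic_ite_mem_pair_sub_one (Nat.Even.sub_odd (Nat.one_le_of_lt (hlt i)) hm odd_one)
    hj₀i hx'i hx'even hx'pos (fun j => ?_) ?_, fun j => by split_ifs <;> omega⟩
  · have := h.le j
    have := hlt j
    omega
  · have : k * (m - 1) + k = k * m := by
      rw [← Nat.mul_add_one, Nat.sub_add_cancel (Nat.one_le_of_lt (hlt i))]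
    omega

theorem isGreatest_basic_of_moveK {k m : ℕ} (hk : 2 ≤ k) {x x' : Fin (k+1) → ℕ}
    (hm : Even m) (hodd : ∀ i, Odd (x i)) (hlt : ∀ i, x i < m)
    (hsum : ∑ i, x i = k * m + k - 1) (h : MoveK k x x') :
    IsGreatest {b | ∃ z, IsBasic k z b ∧ Pre k z x'} (m - 1) := by
  refine ⟨(exists_isBasic_le_of_moveK hk hm hodd hlt hsum h).imp
    fun z hz => ⟨hz.1, Pre.of_le hz.2⟩, ?_⟩
  rintro b ⟨z, hz, hpre⟩
  have hle : k * b < k * m := by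
    have := hpre.sum_le
    rw [hz.1] at this
    have := h.sum_add
    omega
  have := Nat.lt_of_mul_lt_mul_left hle
  omega

theorem isGreatest_basic_of_exceptional {k m : ℕ} (hk : 2 ≤ k) {x : Fin (k+1) → ℕ}
    (hm : Even m) (hodd : ∀ i, Odd (x i)) (hlt : ∀ i, x i < m)
    (hsum : ∑ i, x i = k * m + k - 1) :
    IsGreatest {b | ∃ z, IsBasic k z b ∧ Pre k z x} (m - 1) := by
  have hmove : MoveK k x fun j => if j = 0 then x j else x j - 1 :=
    ⟨0, fun j _ => (hodd j).pos, fun _ => rfl⟩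
  refine ⟨(exists_isBasic_le_of_moveK hk hm hodd hlt hsum hmove).imp
    fun z hz => ⟨hz.1, Pre.of_le fun j => (hz.2 j).trans (hmove.le j)⟩, ?_⟩
  rintro b ⟨z, hz, hpre⟩
  have hsum_le := hpre.sum_le
  rw [hz.1, hsum] at hsum_le
  have hbm : b ≤ m := by
    have : k * b < k * (m + 1) := by rw [Nat.mul_succ]; omega
    exact Nat.lt_succ_iff.1 (Nat.lt_of_mul_lt_mul_left this)
  rcases hbm.lt_or_eq with hbm | rfl
  · omega
  have := hpre.sum_add_le_of_ne fun i j hij =>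
    Nat.not_even_iff_odd.2 (hodd j) (hij ▸ hz.2.2.1 hm i)
  rw [hz.1, hsum] at this
  omega

theorem stmt13 (k : ℕ) (hk : 2 ≤ k) (x x' : Fin (k+1) → ℕ) (m : ℕ)
    (hm : Even m) (hodd : ∀ i, Odd (x i)) (hlt : ∀ i, x i < m)
    (hsum : (∑ i, x i) = k * m + k - 1) (h : MoveK k x x') :
    BVal k x = m - 1 ∧ BVal k x' = m - 1 ∧ Odd (m - 1) :=
  ⟨(isGreatest_basic_of_exceptional hk hm hodd hlt hsum).csSup_eq,
    (isGreatest_basic_of_moveK hk hm hodd hlt hsum h).csSup_eq,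
    Nat.Even.sub_odd (Nat.one_le_of_lt (hlt 0)) hm odd_one⟩
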